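/- arXiv:2510.06441 — 3 statements merged into one kernel-verified Lean document; each statement's English description precedes it below -/
import Mathlib

section
/- Let λ > 1, let q ≥ 2 be an integer, and set α = log q / log λ. Then there exist constants 0 < c ≤ C (depending on q and λ) such that for all sufficiently large integers m, c·m^{-α} ≤ ∑_{a=1}^∞ q^{-a} (1 - (λ-1)/(λ^a - 1))^m ≤ C·m^{-α}. -/
/-!
Write `m = λ ^ y` with `y = log_λ m`, so that `m ^ (-α) = q ^ (-y)`, and let `N = ⌈y⌉`.
Since `1 - x ≤ exp (-x)`, the `n`-th summand is at most `q⁻ⁿ exp (-m (λ - 1) / λⁿ)`; for `n = N - j`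
this is at most `q^(-N) · qʲ exp (-(1 - 1/λ) λʲ)`, and `∑ⱼ qʲ exp (-(1 - 1/λ) λʲ)` converges by the
ratio test. The summands with `n > N` add up to at most `q^(-N)`. Conversely, by Bernoulli's
inequality the `m`-th power stays above `1/2` as soon as `λⁿ ≥ 2 λ m`, which already holds for
`n = N + K + 1` with `λ^K > 2`: that single summand is `≥ q^(-N-K-1) / 2`.
-/

open Real Filter Finset

section Factor

variable {l : ℝ}

lemma one_sub_div_pow_sub_one_nonneg (hl : 1 < l) {n : ℕ} (hn : n ≠ 0) :
    0 ≤ 1 - (l - 1) / (l ^ n - 1) := by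
  have : l ≤ l ^ n := le_self_pow₀ hl.le hn
  rw [sub_nonneg]
  exact div_le_one_of_le₀ (by linarith) (by linarith)

lemma one_sub_div_pow_sub_one_le_one (hl : 1 ≤ l) (n : ℕ) :
    1 - (l - 1) / (l ^ n - 1) ≤ 1 := by
  have : 1 ≤ l ^ n := one_le_pow₀ hl
  have : 0 ≤ (l - 1) / (l ^ n - 1) := div_nonneg (by linarith) (by linarith)
  linarith

lemma one_sub_div_pow_sub_one_le_exp (hl : 1 < l) {n : ℕ} (hn : n ≠ 0) :
    1 - (l - 1) / (l ^ n - 1) ≤ exp (-((l - 1) / l ^ n)) := by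
  have : 0 < l ^ n - 1 := by linarith [le_self_pow₀ hl.le hn]
  calc 1 - (l - 1) / (l ^ n - 1) ≤ 1 - (l - 1) / l ^ n := by
        gcongr 1 - ?_
        exact div_le_div_of_nonneg_left (by linarith) this (by linarith)
    _ ≤ exp (-((l - 1) / l ^ n)) := one_sub_le_exp_neg _

lemma half_le_one_sub_div_pow_sub_one_pow (hl : 1 < l) {n m : ℕ} (hm : 1 ≤ m)
    (hn : 2 * l * m ≤ l ^ n) : 1 / 2 ≤ (1 - (l - 1) / (l ^ n - 1)) ^ m := by
  have hm' : (1 : ℝ) ≤ m := by exact_mod_cast hm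
  have hden : 0 < l ^ n - 1 := by nlinarith
  have hx : (m : ℝ) * ((l - 1) / (l ^ n - 1)) ≤ 1 / 2 := by
    rw [mul_div_assoc', div_le_div_iff₀ hden two_pos]
    nlinarith
  have hx2 : (l - 1) / (l ^ n - 1) ≤ 2 := by
    calc (l - 1) / (l ^ n - 1) ≤ m * ((l - 1) / (l ^ n - 1)) :=
          le_mul_of_one_le_left (div_nonneg (by linarith) hden.le) hm'
      _ ≤ 2 := by linarith
  calc 1 / 2 ≤ 1 + m * (-((l - 1) / (l ^ n - 1))) := by linarith
    _ ≤ (1 - (l - 1) / (l ^ n - 1)) ^ m := by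
      have h := one_add_mul_le_pow (a := -((l - 1) / (l ^ n - 1))) (by linarith) m
      rwa [← sub_eq_add_neg] at h

end Factor

noncomputable def summand (l : ℝ) (q m n : ℕ) : ℝ :=
  ((q : ℝ) ^ n)⁻¹ * (1 - (l - 1) / (l ^ n - 1)) ^ m

section Summand

variable {l : ℝ} {q : ℕ}

lemma summand_nonneg (hl : 1 < l) (m : ℕ) {n : ℕ} (hn : n ≠ 0) : 0 ≤ summand l q m n :=
  mul_nonneg (by positivity) (pow_nonneg (one_sub_div_pow_sub_one_nonneg hl hn) m)

lemma summand_le_inv_pow (hl : 1 < l) (m : ℕ) {n : ℕ} (hn : n ≠ 0) :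
    summand l q m n ≤ ((q : ℝ) ^ n)⁻¹ :=
  mul_le_of_le_one_right (by positivity)
    (pow_le_one₀ (one_sub_div_pow_sub_one_nonneg hl hn) (one_sub_div_pow_sub_one_le_one hl.le n))

lemma summand_le_exp (hl : 1 < l) (m : ℕ) {n : ℕ} (hn : n ≠ 0) :
    summand l q m n ≤ ((q : ℝ) ^ n)⁻¹ * exp (-(m * (l - 1) / l ^ n)) := by
  unfold summand
  gcongr
  calc (1 - (l - 1) / (l ^ n - 1)) ^ m ≤ exp (-((l - 1) / l ^ n)) ^ m := by
        gcongr
        · exact one_sub_div_pow_sub_one_nonneg hl hn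
        · exact one_sub_div_pow_sub_one_le_exp hl hn
    _ = exp (-(m * (l - 1) / l ^ n)) := by rw [← exp_nat_mul]; ring_nf

lemma summable_summand (hl : 1 < l) (hq : 1 < q) (m : ℕ) :
    Summable fun a ↦ summand l q m (a + 1) := by
  have hq' : (q : ℝ)⁻¹ < 1 := inv_lt_one_of_one_lt₀ (by exact_mod_cast hq)
  refine Summable.of_nonneg_of_le (fun a ↦ summand_nonneg hl m a.succ_ne_zero)
    (fun a ↦ (summand_le_inv_pow hl m a.succ_ne_zero).trans_eq (inv_pow _ _).symm) ?_
  exact (summable_nat_add_iff 1).mpr (summable_geometric_of_lt_one (by positivity) hq')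

end Summand

lemma summable_pow_mul_exp_neg_mul_pow {q l c : ℝ} (hq : 0 < q) (hl : 1 < l) (hc : 0 < c) :
    Summable fun j : ℕ ↦ q ^ j * exp (-(c * l ^ j)) := by
  refine summable_of_ratio_test_tendsto_lt_one zero_lt_one
    (Eventually.of_forall fun j ↦ by positivity) ?_
  have hratio : ∀ j : ℕ, ‖q ^ (j + 1) * exp (-(c * l ^ (j + 1)))‖ / ‖q ^ j * exp (-(c * l ^ j))‖
      = q * exp (-(c * (l - 1) * l ^ j)) := fun j ↦ by
    rw [Real.norm_of_nonneg (by positivity), Real.norm_of_nonneg (by positivity),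
      div_eq_iff (by positivity)]
    have : exp (-(c * l ^ (j + 1))) = exp (-(c * (l - 1) * l ^ j)) * exp (-(c * l ^ j)) := by
      rw [← exp_add]; ring_nf
    rw [this]; ring
  simp_rw [hratio]
  have hlim : Tendsto (fun j : ℕ ↦ c * (l - 1) * l ^ j) atTop atTop :=
    (tendsto_pow_atTop_atTop_of_one_lt hl).const_mul_atTop (by nlinarith)
  simpa using (tendsto_exp_neg_atTop_nhds_zero.comp hlim).const_mul q

lemma rpow_neg_log_div_log {l q m : ℝ} (hq : 0 < q) (hm : 0 < m) :
    m ^ (-(log q / log l)) = (q ^ logb l m)⁻¹ := by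
  rw [rpow_def_of_pos hm, rpow_def_of_pos hq, ← exp_neg, logb]
  ring_nf

lemma rpow_le_pow_natCeil {b : ℝ} (hb : 1 ≤ b) (y : ℝ) : b ^ y ≤ b ^ ⌈y⌉₊ := by
  rw [← rpow_natCast]
  exact rpow_le_rpow_of_exponent_le hb (Nat.le_ceil y)

lemma pow_natCeil_le_mul_rpow {b y : ℝ} (hb : 1 ≤ b) (hy : 0 ≤ y) : b ^ ⌈y⌉₊ ≤ b * b ^ y := by
  rw [← rpow_natCast, mul_comm, ← rpow_add_one (by positivity)]
  exact rpow_le_rpow_of_exponent_le hb (Nat.ceil_lt_add_one hy).le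

section Bounds

variable {l : ℝ} {q : ℕ}

lemma summand_le_of_le (hl : 1 < l) (hq : 0 < q) {m n N : ℕ} (hn : n ≠ 0) (hnN : n ≤ N)
    (hN : l ^ N ≤ l * m) :
    summand l q m n ≤ ((q : ℝ) ^ N)⁻¹ * ((q : ℝ) ^ (N - n) * exp (-((l - 1) / l * l ^ (N - n)))) := by
  have hsplit : ∀ x : ℝ, x ^ N = x ^ (N - n) * x ^ n := fun x ↦ by
    rw [← pow_add, Nat.sub_add_cancel hnN]
  have hl0 : 0 < l := by linarith
  have hq0 : (0 : ℝ) < q := by exact_mod_cast hq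
  have hexp : (l - 1) / l * l ^ (N - n) ≤ m * (l - 1) / l ^ n := by
    rw [div_mul_eq_mul_div, div_le_div_iff₀ hl0 (by positivity), mul_assoc, ← hsplit]
    nlinarith
  calc summand l q m n ≤ ((q : ℝ) ^ n)⁻¹ * exp (-(m * (l - 1) / l ^ n)) :=
        summand_le_exp hl m hn
    _ ≤ ((q : ℝ) ^ n)⁻¹ * exp (-((l - 1) / l * l ^ (N - n))) := by gcongr
    _ = _ := by
      rw [hsplit, mul_inv, ← mul_assoc, mul_comm _ ((q : ℝ) ^ (N - n)), ← mul_assoc,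
        mul_inv_cancel₀ (by positivity), one_mul]

lemma sum_range_summand_le (hl : 1 < l) (hq : 0 < q) {m N : ℕ} (hN : l ^ N ≤ l * m) :
    ∑ a ∈ range N, summand l q m (a + 1) ≤
      ((q : ℝ) ^ N)⁻¹ * ∑' j : ℕ, (q : ℝ) ^ j * exp (-((l - 1) / l * l ^ j)) := by
  have hψ := summable_pow_mul_exp_neg_mul_pow (l := l) (c := (l - 1) / l)
    (q := (q : ℝ)) (by exact_mod_cast hq) hl (div_pos (by linarith) (by linarith))
  calc ∑ a ∈ range N, summand l q m (a + 1)
      ≤ ∑ a ∈ range N, ((q : ℝ) ^ N)⁻¹ *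
          ((q : ℝ) ^ (N - 1 - a) * exp (-((l - 1) / l * l ^ (N - 1 - a)))) := by
        refine sum_le_sum fun a ha ↦ ?_
        have := summand_le_of_le hl hq a.succ_ne_zero (mem_range.mp ha) hN
        rwa [Nat.sub_sub, add_comm 1 a]
    _ = ((q : ℝ) ^ N)⁻¹ * ∑ j ∈ range N, (q : ℝ) ^ j * exp (-((l - 1) / l * l ^ j)) := by
        rw [← mul_sum, sum_range_reflect (fun j ↦ (q : ℝ) ^ j * exp (-((l - 1) / l * l ^ j))) N]
    _ ≤ _ := by
        gcongr
        exact hψ.sum_le_tsum _ fun j _ ↦ by positivity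

lemma tsum_summand_add_le (hl : 1 < l) (hq : 2 ≤ q) (m N : ℕ) :
    ∑' a : ℕ, summand l q m (a + N + 1) ≤ ((q : ℝ) ^ N)⁻¹ := by
  have hq2 : (2 : ℝ) ≤ q := by exact_mod_cast hq
  have hbound (a : ℕ) : summand l q m (a + N + 1) ≤ ((q : ℝ) ^ N)⁻¹ * (2⁻¹ : ℝ) ^ (a + 1) := by
    refine (summand_le_inv_pow hl m (a + N).succ_ne_zero).trans ?_
    rw [show (a + N).succ = N + (a + 1) by omega, pow_add, mul_inv, inv_pow]
    gcongr
  have hgeom : Summable fun a : ℕ ↦ (2⁻¹ : ℝ) ^ (a + 1) :=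
    (summable_nat_add_iff 1).mpr (summable_geometric_of_lt_one (by norm_num) (by norm_num))
  calc ∑' a : ℕ, summand l q m (a + N + 1)
      ≤ ∑' a : ℕ, ((q : ℝ) ^ N)⁻¹ * (2⁻¹ : ℝ) ^ (a + 1) :=
        ((summable_nat_add_iff N).mpr (summable_summand hl (by omega) m)).tsum_le_tsum
          hbound (hgeom.mul_left _)
    _ = ((q : ℝ) ^ N)⁻¹ := by
        simp_rw [tsum_mul_left, pow_succ, tsum_mul_right, tsum_geometric_inv_two]
        norm_num

end Bounds

section Asymptotics

variable {l : ℝ} {q : ℕ}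

theorem tsum_summand_le_rpow (hl : 1 < l) (hq : 2 ≤ q) :
    ∃ C : ℝ, ∀ m : ℕ, 1 ≤ m →
      ∑' a : ℕ, summand l q m (a + 1) ≤ C * (m : ℝ) ^ (-(log q / log l)) := by
  set B := ∑' j : ℕ, (q : ℝ) ^ j * exp (-((l - 1) / l * l ^ j))
  have hB : 0 ≤ B := tsum_nonneg fun j ↦ by positivity
  refine ⟨B + 1, fun m hm ↦ ?_⟩
  have hm1 : (1 : ℝ) ≤ m := by exact_mod_cast hm
  have hy : 0 ≤ logb l m := logb_nonneg hl hm1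
  set N := ⌈logb l m⌉₊
  have hlN : l ^ N ≤ l * m := by
    have := pow_natCeil_le_mul_rpow hl.le hy
    rwa [rpow_logb (by linarith) hl.ne' (by linarith)] at this
  have hqN : ((q : ℝ) ^ N)⁻¹ ≤ (m : ℝ) ^ (-(log q / log l)) := by
    have hq1 : (1 : ℝ) ≤ q := by exact_mod_cast (by omega : 1 ≤ q)
    rw [rpow_neg_log_div_log (by linarith) (by linarith)]
    gcongr
    exact rpow_le_pow_natCeil hq1 _
  rw [← (summable_summand hl (by omega) m).sum_add_tsum_nat_add N]
  calc ∑ a ∈ range N, summand l q m (a + 1) + ∑' a : ℕ, summand l q m (a + N + 1)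
      ≤ ((q : ℝ) ^ N)⁻¹ * B + ((q : ℝ) ^ N)⁻¹ :=
        add_le_add (sum_range_summand_le hl (by omega) hlN) (tsum_summand_add_le hl hq m N)
    _ = (B + 1) * ((q : ℝ) ^ N)⁻¹ := by ring
    _ ≤ (B + 1) * (m : ℝ) ^ (-(log q / log l)) := by gcongr

theorem rpow_le_tsum_summand (hl : 1 < l) (hq : 2 ≤ q) :
    ∃ c : ℝ, 0 < c ∧ ∀ m : ℕ, 1 ≤ m →
      c * (m : ℝ) ^ (-(log q / log l)) ≤ ∑' a : ℕ, summand l q m (a + 1) := by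
  obtain ⟨K, hK⟩ := pow_unbounded_of_one_lt 2 hl
  have hq1 : (1 : ℝ) ≤ q := by exact_mod_cast (by omega : 1 ≤ q)
  refine ⟨(2 * (q : ℝ) ^ (K + 2))⁻¹, by positivity, fun m hm ↦ ?_⟩
  have hm1 : (1 : ℝ) ≤ m := by exact_mod_cast hm
  set N := ⌈logb l m⌉₊
  have hmN : (m : ℝ) ≤ l ^ N := by
    have := rpow_le_pow_natCeil hl.le (logb l m)
    rwa [rpow_logb (by linarith) hl.ne' (by linarith)] at this
  have hqN : (q : ℝ) ^ N ≤ q * q ^ logb l m := pow_natCeil_le_mul_rpow hq1 (logb_nonneg hl hm1)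
  have hln : 2 * l * m ≤ l ^ (N + K + 1) := by
    rw [pow_succ, pow_add]
    calc 2 * l * m = m * 2 * l := by ring
      _ ≤ l ^ N * l ^ K * l := by gcongr
  calc (2 * (q : ℝ) ^ (K + 2))⁻¹ * (m : ℝ) ^ (-(log q / log l))
      = ((q : ℝ) ^ (K + 2) * q ^ logb l m)⁻¹ * (1 / 2) := by
        rw [rpow_neg_log_div_log (by linarith) (by linarith)]
        ring
    _ ≤ ((q : ℝ) ^ (N + K + 1))⁻¹ * (1 - (l - 1) / (l ^ (N + K + 1) - 1)) ^ m := by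
        gcongr
        · calc (q : ℝ) ^ (N + K + 1) = q ^ N * q ^ K * q := by rw [pow_succ, pow_add]
            _ ≤ (q * q ^ logb l m) * q ^ K * q := by gcongr
            _ = q ^ (K + 2) * q ^ logb l m := by ring
        · exact half_le_one_sub_div_pow_sub_one_pow hl hm hln
    _ ≤ ∑' a : ℕ, summand l q m (a + 1) :=
        (summable_summand hl (by omega) m).le_tsum (N + K)
          fun a _ ↦ summand_nonneg hl m a.succ_ne_zero

end Asymptotics

/-- For `λ > 1`, integer `q ≥ 2` and `α = log q / log λ`, there are constants `0 < c ≤ C` such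
that for all sufficiently large `m`,
`c·m^{-α} ≤ ∑_{a≥1} q^{-a} (1-(λ-1)/(λ^a-1))^m ≤ C·m^{-α}`. -/
theorem stmt_4 (l : ℝ) (hl : 1 < l) (q : ℕ) (hq : 2 ≤ q) :
    ∃ c C : ℝ, 0 < c ∧ c ≤ C ∧ ∃ M : ℕ, ∀ m : ℕ, M ≤ m →
      c * (m : ℝ) ^ (-(Real.log q / Real.log l)) ≤
          (∑' a : ℕ, ((q : ℝ) ^ (a + 1))⁻¹ * (1 - (l - 1) / (l ^ (a + 1) - 1)) ^ m) ∧
        (∑' a : ℕ, ((q : ℝ) ^ (a + 1))⁻¹ * (1 - (l - 1) / (l ^ (a + 1) - 1)) ^ m) ≤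
          C * (m : ℝ) ^ (-(Real.log q / Real.log l)) := by
  obtain ⟨c, hc, hlower⟩ := rpow_le_tsum_summand hl hq
  obtain ⟨C, hupper⟩ := tsum_summand_le_rpow hl hq
  have hcC : c ≤ C := by
    simpa using (hlower 1 le_rfl).trans (hupper 1 le_rfl)
  exact ⟨c, C, hc, hcC, 1, fun m hm ↦ ⟨hlower m hm, hupper m hm⟩⟩
end

section
/- Let λ > 1, q ≥ 2 an integer, and α = log q / log λ. Then there is a constant c > 0 (depending on q, λ) such that for all m ≥ 2(αλ/(λ-1))², ∑_{a=1}^∞ q^{-a} (1 - (λ-1)/(λ^a - 1))^m ≥ c·m^{-α}. (Lower bound half of the asymptotic estimate.) -/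
/-!
A single term of the series already gives the bound. Take the index `n` with
`λ^n ≤ 2mλ < λ^(n+1)`. Then `(λ-1)/(λ^(n+1)-1) ≤ 1/(2m)`, so by Bernoulli's inequality the
factor `(1 - (λ-1)/(λ^(n+1)-1))^m` is at least `1/2`, while `q^(n+1) = (λ^(n+1))^α ≤ (2λ²m)^α`
because `q = λ^α`.
-/

open Real

lemma sub_one_div_pow_sub_one_nonneg {l : ℝ} (hl : 1 < l) (n : ℕ) :
    0 ≤ (l - 1) / (l ^ n - 1) :=
  div_nonneg (sub_nonneg.2 hl.le) (sub_nonneg.2 (one_le_pow₀ hl.le))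

lemma sub_one_div_pow_sub_one_le_one {l : ℝ} (hl : 1 < l) {n : ℕ} (hn : n ≠ 0) :
    (l - 1) / (l ^ n - 1) ≤ 1 := by
  have hpow : l ≤ l ^ n := le_self_pow₀ hl.le hn
  rw [div_le_one (by linarith)]
  linarith

lemma one_sub_sub_one_div_pow_sub_one_mem_Icc {l : ℝ} (hl : 1 < l) {n : ℕ} (hn : n ≠ 0) :
    1 - (l - 1) / (l ^ n - 1) ∈ Set.Icc 0 1 :=
  ⟨sub_nonneg.2 (sub_one_div_pow_sub_one_le_one hl hn),
    sub_le_self _ (sub_one_div_pow_sub_one_nonneg hl n)⟩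

lemma summable_inv_pow_succ_mul {q : ℝ} (hq : 1 < q) {g : ℕ → ℝ} (hg0 : ∀ a, 0 ≤ g a)
    (hg1 : ∀ a, g a ≤ 1) : Summable fun a : ℕ => (q ^ (a + 1))⁻¹ * g a := by
  have hq0 : 0 < q := zero_lt_one.trans hq
  refine Summable.of_nonneg_of_le (fun a => mul_nonneg (by positivity) (hg0 a)) (fun a => ?_)
    (summable_geometric_of_lt_one (inv_nonneg.2 hq0.le) (inv_lt_one_of_one_lt₀ hq))
  calc (q ^ (a + 1))⁻¹ * g a ≤ (q ^ (a + 1))⁻¹ := mul_le_of_le_one_right (by positivity) (hg1 a)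
    _ ≤ (q ^ a)⁻¹ := inv_anti₀ (by positivity) (pow_le_pow_right₀ hq.le a.le_succ)
    _ = q⁻¹ ^ a := (inv_pow q a).symm

lemma pow_rpow_log_div_log {l q : ℝ} (hl : 0 < l) (hl1 : l ≠ 1) (hq : 0 < q) (n : ℕ) :
    (l ^ n) ^ (log q / log l) = q ^ n := by
  have hlog : log l ≠ 0 := log_ne_zero_of_pos_of_ne_one hl hl1
  rw [rpow_def_of_pos (pow_pos hl n), log_pow, mul_assoc, mul_div_cancel₀ _ hlog,
    ← log_pow, exp_log (pow_pos hq n)]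

lemma pow_le_rpow_log_div_log {l q y : ℝ} (hl : 1 < l) (hq : 1 ≤ q) {n : ℕ} (h : l ^ n ≤ y) :
    q ^ n ≤ y ^ (log q / log l) := by
  rw [← pow_rpow_log_div_log (zero_lt_one.trans hl) hl.ne' (zero_lt_one.trans_le hq) n]
  exact rpow_le_rpow (by positivity) h (div_nonneg (log_nonneg hq) (log_nonneg hl.le))

lemma half_le_one_sub_sub_one_div_pow_sub_one_pow {l : ℝ} (hl : 1 < l) {m n : ℕ} (hm : 1 ≤ m)
    (hn : 2 * m * l ≤ l ^ n) : 1 / 2 ≤ (1 - (l - 1) / (l ^ n - 1)) ^ m := by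
  have hm1 : (1 : ℝ) ≤ m := Nat.one_le_cast.2 hm
  have hpos : 0 < l ^ n - 1 := by nlinarith
  set x := (l - 1) / (l ^ n - 1)
  have hmx : m * x ≤ 1 / 2 := by
    rw [← mul_div_assoc, div_le_div_iff₀ hpos two_pos]
    nlinarith
  have hx : x ≤ 1 / 2 :=
    (le_mul_of_one_le_left (sub_one_div_pow_sub_one_nonneg hl n) hm1).trans hmx
  calc (1 : ℝ) / 2 ≤ 1 + m * (-x) := by linarith
    _ ≤ (1 + -x) ^ m := one_add_mul_le_pow (by linarith) m
    _ = (1 - x) ^ m := by rw [← sub_eq_add_neg]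

/-- Lower bound: for `λ > 1`, integer `q ≥ 2`, `α = log q / log λ`, there is `c > 0` such that
for all `m ≥ 2(αλ/(λ-1))²`,
`c·m^{-α} ≤ ∑_{a≥1} q^{-a} (1-(λ-1)/(λ^a-1))^m`. -/
theorem stmt_6 (l : ℝ) (hl : 1 < l) (q : ℕ) (hq : 2 ≤ q) :
    ∃ c : ℝ, 0 < c ∧ ∀ m : ℕ,
      2 * ((Real.log q / Real.log l) * l / (l - 1)) ^ 2 ≤ (m : ℝ) →
      c * (m : ℝ) ^ (-(Real.log q / Real.log l)) ≤
        ∑' a : ℕ, ((q : ℝ) ^ (a + 1))⁻¹ * (1 - (l - 1) / (l ^ (a + 1) - 1)) ^ m := by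
  set α := log q / log l
  have hl0 : 0 < l := zero_lt_one.trans hl
  have hq1 : (1 : ℝ) < q := by exact_mod_cast hq
  have hα : 0 < α := div_pos (log_pos hq1) (log_pos hl)
  refine ⟨(2 * (2 * l ^ 2) ^ α)⁻¹, by positivity, fun m hm => ?_⟩
  have hm0 : (0 : ℝ) < m :=
    (mul_pos two_pos (pow_pos (div_pos (mul_pos hα hl0) (sub_pos.2 hl)) 2)).trans_le hm
  have hm1 : 1 ≤ m := Nat.one_le_iff_ne_zero.2 (by rintro rfl; simp at hm0)
  have hfactor (a : ℕ) := one_sub_sub_one_div_pow_sub_one_mem_Icc hl a.succ_ne_zero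
  obtain ⟨n, hn_le, hn_lt⟩ :=
    exists_nat_pow_near (x := 2 * m * l) (by nlinarith [(Nat.one_le_cast.2 hm1 : (1 : ℝ) ≤ m)]) hl
  have hqn : (q : ℝ) ^ (n + 1) ≤ (2 * l ^ 2 * m) ^ α :=
    pow_le_rpow_log_div_log hl hq1.le (by rw [pow_succ]; nlinarith)
  have hsum := summable_inv_pow_succ_mul hq1 (g := fun a => (1 - (l - 1) / (l ^ (a + 1) - 1)) ^ m)
    (fun a => pow_nonneg (hfactor a).1 m) (fun a => pow_le_one₀ (hfactor a).1 (hfactor a).2)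
  calc (2 * (2 * l ^ 2) ^ α)⁻¹ * (m : ℝ) ^ (-α) = ((2 * l ^ 2 * m) ^ α)⁻¹ * (1 / 2) := by
        rw [rpow_neg hm0.le, mul_rpow (by positivity) hm0.le]
        ring
    _ ≤ ((q : ℝ) ^ (n + 1))⁻¹ * (1 - (l - 1) / (l ^ (n + 1) - 1)) ^ m :=
        mul_le_mul (inv_anti₀ (by positivity) hqn)
          (half_le_one_sub_sub_one_div_pow_sub_one_pow hl hm1 hn_lt.le) (by norm_num)
          (by positivity)
    _ ≤ _ := hsum.le_tsum n fun a _ => mul_nonneg (by positivity) (pow_nonneg (hfactor a).1 m)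
end

section
/- Let Γ = (V,E) be a connected locally finite rooted graph with root o, and let Z_n be the λ-homesick random walk on Γ for λ ≥ 1. Then for every integer r ≥ 1, P(max_{i < τ_o^+} dist(o, Z_i) ≥ r) ≤ (deg o)^{-1} · (∑_{i=0}^{r-1} |∂_E B_i|^{-1} λ^i)^{-1}, where τ_o^+ is the first return time to o. -/
open scoped Classical

noncomputable section

/-- The transition kernel of the `λ`-homesick random walk on a rooted graph `(Γ, o)`:
the walk moves along each edge with probability proportional to its conductance
`λ^{-min(dist(o,·),dist(o,·))}`. -/
def homesickT {V : Type*} (G : SimpleGraph V) [G.LocallyFinite] (o : V) (l : ℝ)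
    (v w : V) : ℝ :=
  if G.Adj v w then
    (l ^ (min (G.dist o v) (G.dist o w)))⁻¹ /
      ∑ u ∈ G.neighborFinset v, (l ^ (min (G.dist o v) (G.dist o u)))⁻¹
  else 0

/-- The number of (directed) edges leaving the ball of radius `i` around `o`. -/
def bdCount {V : Type*} (G : SimpleGraph V) (o : V) (i : ℕ) : ℕ :=
  {q : V × V | G.Adj q.1 q.2 ∧ G.dist o q.1 ≤ i ∧ ¬ G.dist o q.2 ≤ i}.ncard

/-!
Nash-Williams' argument for the network with conductances `λ^{-min(|v|,|w|)}`. Let `I` be the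
current `∑_{w ∼ o} h(w)` leaving `o`, so that the escape probability is `I / deg o`. Harmonicity
of `h` on the spheres `K_1, …, K_{r-1}` makes the current through each cut `∂_E B_i`, `i < r`,
equal to `I`; summing `h · Δh = 0` over these spheres bounds the energy dissipated in the cuts by
the current into `K_r` weighted by `h ≡ 1`, i.e. by `I` (edges inside a sphere only dissipate).
On `∂_E B_i` all conductances equal `λ^{-i}`, so by Cauchy–Schwarz the energy of that cut is at
least `I² λ^i / |∂_E B_i|`. Summing over `i < r` gives `I² S ≤ I`, hence `I ≤ S⁻¹`.
-/

open Finset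

theorem le_inv_of_sq_mul_le {x s : ℝ} (hs₀ : 0 ≤ s) (hs : 0 < x → 0 < s) (h : x ^ 2 * s ≤ x) :
    x ≤ s⁻¹ := by
  rcases le_or_gt x 0 with hx | hx
  · exact hx.trans (inv_nonneg.mpr hs₀)
  · rw [← one_div, le_div_iff₀ (hs hx)]
    nlinarith

namespace SimpleGraph

variable {V : Type*} {G : SimpleGraph V}

theorem Connected.exists_adj_dist_lt (hconn : G.Connected) {o v : V} (hv : 0 < G.dist o v) :
    ∃ w, G.Adj v w ∧ G.dist o w < G.dist o v := by
  obtain ⟨p, hp⟩ := hconn.exists_walk_length_eq_dist v o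
  cases p with
  | nil => simp at hv
  | cons hadj q =>
    refine ⟨_, hadj, ?_⟩
    rw [dist_comm (u := o), dist_comm (u := o), ← hp, Walk.length_cons]
    exact (dist_le q).trans_lt (Nat.lt_succ_self _)

section

variable (G) (o : V) (l : ℝ)

def homesickConductance (v w : V) : ℝ :=
  (l ^ min (G.dist o v) (G.dist o w))⁻¹

end

section

variable {o : V} {l : ℝ}

theorem homesickConductance_comm (v w : V) :
    homesickConductance G o l v w = homesickConductance G o l w v := by
  rw [homesickConductance, homesickConductance, min_comm]

theorem homesickConductance_nonneg (hl : 0 ≤ l) (v w : V) : 0 ≤ homesickConductance G o l v w :=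
  inv_nonneg.mpr (pow_nonneg hl _)

theorem homesickConductance_root (w : V) : homesickConductance G o l o w = 1 := by
  rw [homesickConductance, dist_self, Nat.zero_min, pow_zero, inv_one]

end

section

variable (G) [G.LocallyFinite]

def ballFinset (o : V) : ℕ → Finset V
  | 0 => {o}
  | n + 1 => ballFinset o n ∪ (ballFinset o n).biUnion fun v => G.neighborFinset v

def sphereFinset (o : V) (i : ℕ) : Finset V :=
  (G.ballFinset o i).filter (G.dist o · = i)

def cut (o : V) (i j : ℕ) : Finset (V × V) :=
  (G.sphereFinset o i ×ˢ G.sphereFinset o j).filter (fun q => G.Adj q.1 q.2)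

end

variable [G.LocallyFinite]

theorem Connected.mem_ballFinset_of_dist_le (hconn : G.Connected) {o v : V} {n : ℕ}
    (hv : G.dist o v ≤ n) : v ∈ G.ballFinset o n := by
  induction n generalizing v with
  | zero => simp [ballFinset, ((hconn.dist_eq_zero_iff).mp (Nat.le_zero.mp hv)).symm]
  | succ n ih =>
    rw [ballFinset, mem_union, mem_biUnion]
    rcases Nat.lt_or_ge n (G.dist o v) with hlt | hle
    · obtain ⟨w, hadj, hw⟩ := hconn.exists_adj_dist_lt (o := o) (v := v) (by omega)
      exact Or.inr ⟨w, ih (by omega), (G.mem_neighborFinset w v).mpr hadj.symm⟩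
    · exact Or.inl (ih hle)

theorem Connected.mem_sphereFinset (hconn : G.Connected) {o v : V} {i : ℕ} :
    v ∈ G.sphereFinset o i ↔ G.dist o v = i := by
  rw [sphereFinset, mem_filter]
  exact ⟨And.right, fun hv => ⟨hconn.mem_ballFinset_of_dist_le hv.le, hv⟩⟩

theorem Connected.mem_cut (hconn : G.Connected) {o : V} {i j : ℕ} {q : V × V} :
    q ∈ G.cut o i j ↔ G.Adj q.1 q.2 ∧ G.dist o q.1 = i ∧ G.dist o q.2 = j := by
  rw [cut, mem_filter, mem_product, hconn.mem_sphereFinset, hconn.mem_sphereFinset]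
  tauto

theorem sum_cut_comm (o : V) (i j : ℕ) (F : V → V → ℝ) :
    ∑ q ∈ G.cut o i j, F q.1 q.2 = ∑ q ∈ G.cut o j i, F q.2 q.1 := by
  refine sum_equiv (Equiv.prodComm V V) (fun q => ?_) (fun _ _ => rfl)
  simp only [cut, mem_filter, mem_product, Equiv.prodComm_apply, Prod.fst_swap, Prod.snd_swap]
  rw [G.adj_comm]
  tauto

theorem Connected.sum_cut (hconn : G.Connected) (o : V) (i j : ℕ) (F : V → V → ℝ) :
    ∑ q ∈ G.cut o i j, F q.1 q.2 =
      ∑ v ∈ G.sphereFinset o i, ∑ w ∈ G.neighborFinset v with G.dist o w = j, F v w := by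
  rw [cut, sum_filter, sum_product]
  refine sum_congr rfl fun v _ => ?_
  rw [← sum_filter]
  congr 1
  ext w
  simp [hconn.mem_sphereFinset, and_comm]

theorem Connected.sum_cut_zero_one (hconn : G.Connected) (o : V) (F : V → V → ℝ) :
    ∑ q ∈ G.cut o 0 1, F q.1 q.2 = ∑ w ∈ G.neighborFinset o, F o w := by
  have hsphere : G.sphereFinset o 0 = {o} := by
    ext v
    rw [hconn.mem_sphereFinset, mem_singleton, hconn.dist_eq_zero_iff, eq_comm]
  rw [hconn.sum_cut, hsphere, sum_singleton]
  congr 1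
  exact filter_true_of_mem fun w hw => dist_eq_one_iff_adj.mpr ((G.mem_neighborFinset o w).mp hw)

theorem Connected.sum_sphereFinset_sum_neighborFinset (hconn : G.Connected) (o : V) (i : ℕ)
    (F : V → V → ℝ) :
    ∑ v ∈ G.sphereFinset o (i + 1), ∑ w ∈ G.neighborFinset v, F v w =
      ∑ q ∈ G.cut o (i + 1) i, F q.1 q.2 + ∑ q ∈ G.cut o (i + 1) (i + 1), F q.1 q.2 +
        ∑ q ∈ G.cut o (i + 1) (i + 2), F q.1 q.2 := by
  have hfiber : ∀ v ∈ G.sphereFinset o (i + 1), ∑ w ∈ G.neighborFinset v, F v w =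
      ∑ j ∈ Icc i (i + 2), ∑ w ∈ G.neighborFinset v with G.dist o w = j, F v w := by
    intro v hv
    refine (sum_fiberwise_of_maps_to (fun w hw => ?_) _).symm
    have := ((G.mem_neighborFinset v w).mp hw).diff_dist_adj (u := o)
    rw [hconn.mem_sphereFinset] at hv
    rw [mem_Icc]
    omega
  rw [sum_congr rfl hfiber, sum_comm, sum_Icc_succ_top (by omega), sum_Icc_succ_top (by omega),
    Icc_self, sum_singleton]
  simp only [hconn.sum_cut]

theorem Connected.card_cut_eq_bdCount (hconn : G.Connected) (o : V) (i : ℕ) :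
    #(G.cut o i (i + 1)) = bdCount G o i := by
  rw [bdCount, ← Set.ncard_coe_finset]
  congr 1
  ext q
  rw [mem_coe, hconn.mem_cut, Set.mem_ofPred_eq]
  refine and_congr_right fun hadj => ?_
  have := hadj.diff_dist_adj (u := o)
  omega

section Network

variable (G) (o : V) (c : V → V → ℝ) (h : V → ℝ)

def laplacian (v : V) : ℝ :=
  ∑ w ∈ G.neighborFinset v, c v w * (h w - h v)

def weightedFlux (g : V → V → ℝ) (i : ℕ) : ℝ :=
  ∑ q ∈ G.cut o i (i + 1), c q.1 q.2 * (h q.2 - h q.1) * g q.1 q.2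

variable {G o c h}

theorem weightedFlux_sub (g₁ g₂ : V → V → ℝ) (i : ℕ) :
    G.weightedFlux o c h (fun v w => g₁ v w - g₂ v w) i =
      G.weightedFlux o c h g₁ i - G.weightedFlux o c h g₂ i := by
  simp only [weightedFlux, mul_sub, sum_sub_distrib]

theorem laplacian_eq_zero_of_eq_sum_div {v : V} (hc : ∀ w, 0 ≤ c v w)
    (hv : h v = ∑ w ∈ G.neighborFinset v, c v w / (∑ u ∈ G.neighborFinset v, c v u) * h w) :
    G.laplacian c h v = 0 := by
  set C := ∑ u ∈ G.neighborFinset v, c v u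
  by_cases hC : C = 0
  · rw [sum_eq_zero_iff_of_nonneg fun w _ => hc w] at hC
    exact sum_eq_zero fun w hw => by rw [hC w hw, zero_mul]
  · have hsum : ∑ w ∈ G.neighborFinset v, c v w * h w = C * h v := by
      rw [hv, mul_sum]
      exact sum_congr rfl fun w _ => by field_simp
    rw [laplacian]
    simp only [mul_sub, sum_sub_distrib, ← sum_mul, hsum]
    exact sub_self _

theorem sum_cut_self_eq_zero (hc : ∀ v w, c v w = c w v) (a : ℕ) :
    ∑ q ∈ G.cut o a a, c q.1 q.2 * (h q.2 - h q.1) = 0 := by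
  have hswap := sum_cut_comm (G := G) o a a fun v w => c v w * (h w - h v)
  have hneg : ∑ q ∈ G.cut o a a, c q.2 q.1 * (h q.1 - h q.2) =
      -∑ q ∈ G.cut o a a, c q.1 q.2 * (h q.2 - h q.1) := by
    rw [← sum_neg_distrib]
    exact sum_congr rfl fun q _ => by rw [hc]; ring
  linarith

/-- On edges inside a sphere, `∑ c (h w - h v) h v = -½ ∑ c (h w - h v)²`. -/
theorem sum_cut_self_mul_nonpos (hc : ∀ v w, c v w = c w v) (hc₀ : ∀ v w, 0 ≤ c v w)
    (a : ℕ) : ∑ q ∈ G.cut o a a, c q.1 q.2 * (h q.2 - h q.1) * h q.1 ≤ 0 := by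
  have hswap := sum_cut_comm (G := G) o a a fun v w => c v w * (h w - h v) * h v
  have hsq : ∑ q ∈ G.cut o a a, c q.1 q.2 * (h q.2 - h q.1) * h q.1 +
      ∑ q ∈ G.cut o a a, c q.2 q.1 * (h q.1 - h q.2) * h q.2 =
        -∑ q ∈ G.cut o a a, c q.1 q.2 * (h q.2 - h q.1) ^ 2 := by
    rw [← sum_add_distrib, ← sum_neg_distrib]
    exact sum_congr rfl fun q _ => by rw [hc q.2]; ring
  have hnonneg : 0 ≤ ∑ q ∈ G.cut o a a, c q.1 q.2 * (h q.2 - h q.1) ^ 2 :=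
    sum_nonneg fun q _ => mul_nonneg (hc₀ _ _) (sq_nonneg _)
  linarith

/-- Summing `g v · Δh(v) = 0` over the sphere of radius `i + 1` and sorting its edges by the
radius of their other end. -/
theorem Connected.weightedFlux_eq_of_laplacian_eq_zero (hconn : G.Connected)
    (hc : ∀ v w, c v w = c w v) {i : ℕ}
    (harm : ∀ v, G.dist o v = i + 1 → G.laplacian c h v = 0) (g : V → ℝ) :
    G.weightedFlux o c h (fun _ w => g w) i =
      G.weightedFlux o c h (fun v _ => g v) (i + 1) +
        ∑ q ∈ G.cut o (i + 1) (i + 1), c q.1 q.2 * (h q.2 - h q.1) * g q.1 := by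
  have hzero : ∑ v ∈ G.sphereFinset o (i + 1),
      ∑ w ∈ G.neighborFinset v, c v w * (h w - h v) * g v = 0 := by
    refine sum_eq_zero fun v hv => ?_
    rw [← sum_mul, ← laplacian, harm v (hconn.mem_sphereFinset.mp hv), zero_mul]
  rw [hconn.sum_sphereFinset_sum_neighborFinset,
    sum_cut_comm o (i + 1) i fun v w => c v w * (h w - h v) * g v] at hzero
  have hinward : ∑ q ∈ G.cut o i (i + 1), c q.2 q.1 * (h q.1 - h q.2) * g q.2 =
      -G.weightedFlux o c h (fun _ w => g w) i := by
    rw [weightedFlux, ← sum_neg_distrib]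
    exact sum_congr rfl fun q _ => by rw [hc]; ring
  have houtward : G.weightedFlux o c h (fun v _ => g v) (i + 1) =
      ∑ q ∈ G.cut o (i + 1) (i + 2), c q.1 q.2 * (h q.2 - h q.1) * g q.1 := rfl
  linarith

theorem Connected.flux_succ (hconn : G.Connected) (hc : ∀ v w, c v w = c w v) {i : ℕ}
    (harm : ∀ v, G.dist o v = i + 1 → G.laplacian c h v = 0) :
    G.weightedFlux o c h (fun _ _ => 1) (i + 1) = G.weightedFlux o c h (fun _ _ => 1) i := by
  have key := hconn.weightedFlux_eq_of_laplacian_eq_zero hc harm fun _ => 1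
  simp only [mul_one, sum_cut_self_eq_zero hc, add_zero] at key
  exact key.symm

theorem Connected.weightedFlux_outer_le_inner (hconn : G.Connected)
    (hc : ∀ v w, c v w = c w v) (hc₀ : ∀ v w, 0 ≤ c v w) {i : ℕ}
    (harm : ∀ v, G.dist o v = i + 1 → G.laplacian c h v = 0) :
    G.weightedFlux o c h (fun _ w => h w) i ≤ G.weightedFlux o c h (fun v _ => h v) (i + 1) := by
  rw [hconn.weightedFlux_eq_of_laplacian_eq_zero hc harm h]
  linarith [sum_cut_self_mul_nonpos (G := G) (o := o) (h := h) hc hc₀ (i + 1)]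

theorem Connected.flux_eq_flux_zero (hconn : G.Connected) (hc : ∀ v w, c v w = c w v) {n : ℕ}
    (harm : ∀ v, 0 < G.dist o v → G.dist o v ≤ n → G.laplacian c h v = 0) :
    G.weightedFlux o c h (fun _ _ => 1) n = G.weightedFlux o c h (fun _ _ => 1) 0 := by
  induction n with
  | zero => rfl
  | succ n ih =>
    rw [hconn.flux_succ hc fun v hv => harm v (by omega) hv.le,
      ih fun v hv hvn => harm v hv (by omega)]

theorem Connected.sum_energy_le (hconn : G.Connected) (hc : ∀ v w, c v w = c w v)
    (hc₀ : ∀ v w, 0 ≤ c v w) (h₀ : h o = 0) {n : ℕ}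
    (harm : ∀ v, 0 < G.dist o v → G.dist o v ≤ n → G.laplacian c h v = 0) :
    ∑ i ∈ range (n + 1), G.weightedFlux o c h (fun v w => h w - h v) i ≤
      G.weightedFlux o c h (fun _ w => h w) n := by
  induction n with
  | zero =>
    have hinner : G.weightedFlux o c h (fun v _ => h v) 0 = 0 := by
      rw [weightedFlux, hconn.sum_cut_zero_one o fun v w => c v w * (h w - h v) * h v, h₀]
      simp
    rw [sum_range_one, weightedFlux_sub, hinner, sub_zero]
  | succ n ih =>
    rw [sum_range_succ, weightedFlux_sub]
    have := ih fun v hv hvn => harm v hv (by omega)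
    have := hconn.weightedFlux_outer_le_inner hc hc₀ (i := n) fun v hv => harm v (by omega) hv.le
    linarith

end Network

section

variable {o : V} {l : ℝ} {h : V → ℝ}

theorem Connected.homesickConductance_of_mem_cut (hconn : G.Connected) {i : ℕ} {q : V × V}
    (hq : q ∈ G.cut o i (i + 1)) : homesickConductance G o l q.1 q.2 = (l ^ i)⁻¹ := by
  obtain ⟨-, h₁, h₂⟩ := hconn.mem_cut.mp hq
  rw [homesickConductance, h₁, h₂, min_eq_left (Nat.le_succ i)]

theorem homesickT_of_adj {v w : V} (hvw : G.Adj v w) :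
    homesickT G o l v w =
      homesickConductance G o l v w / ∑ u ∈ G.neighborFinset v, homesickConductance G o l v u := by
  rw [homesickT, if_pos hvw]
  rfl

theorem laplacian_homesickConductance_eq_zero (hl : 0 ≤ l) {v : V}
    (hv : h v = ∑ w ∈ G.neighborFinset v, homesickT G o l v w * h w) :
    G.laplacian (homesickConductance G o l) h v = 0 := by
  refine laplacian_eq_zero_of_eq_sum_div (homesickConductance_nonneg hl v)
    (hv.trans (sum_congr rfl fun w hw => ?_))
  rw [homesickT_of_adj ((G.mem_neighborFinset v w).mp hw)]

theorem Connected.sum_homesickT_root_mul (hconn : G.Connected) (h₀ : h o = 0) :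
    ∑ w ∈ G.neighborFinset o, homesickT G o l o w * h w =
      (G.degree o : ℝ)⁻¹ * G.weightedFlux o (homesickConductance G o l) h (fun _ _ => 1) 0 := by
  rw [weightedFlux, hconn.sum_cut_zero_one o fun v w => homesickConductance G o l v w *
    (h w - h v) * 1, mul_sum]
  refine sum_congr rfl fun w hw => ?_
  rw [homesickT_of_adj ((G.mem_neighborFinset o w).mp hw), sum_congr rfl fun u _ =>
    homesickConductance_root u, homesickConductance_root, h₀, sum_const,
    card_neighborFinset_eq_degree, nsmul_one]
  ring

/-- Cauchy–Schwarz on the cut between the spheres of radii `i` and `i + 1`, where all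
conductances equal `λ⁻ⁱ`. -/
theorem Connected.sq_flux_mul_le_energy (hconn : G.Connected) (hl : 0 < l) (i : ℕ) :
    G.weightedFlux o (homesickConductance G o l) h (fun _ _ => 1) i ^ 2 *
        ((#(G.cut o i (i + 1)) : ℝ)⁻¹ * l ^ i) ≤
      G.weightedFlux o (homesickConductance G o l) h (fun v w => h w - h v) i := by
  set s := G.cut o i (i + 1)
  have hc : ∀ q ∈ s, homesickConductance G o l q.1 q.2 = (l ^ i)⁻¹ :=
    fun q hq => hconn.homesickConductance_of_mem_cut hq
  have hflux : G.weightedFlux o (homesickConductance G o l) h (fun _ _ => 1) i =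
      (l ^ i)⁻¹ * ∑ q ∈ s, (h q.2 - h q.1) := by
    rw [weightedFlux, mul_sum]
    exact sum_congr rfl fun q hq => by rw [hc q hq, mul_one]
  have henergy : G.weightedFlux o (homesickConductance G o l) h (fun v w => h w - h v) i =
      (l ^ i)⁻¹ * ∑ q ∈ s, (h q.2 - h q.1) ^ 2 := by
    rw [weightedFlux, mul_sum]
    exact sum_congr rfl fun q hq => by rw [hc q hq]; ring
  have hl' : l ^ i ≠ 0 := pow_ne_zero i hl.ne'
  calc _ = (l ^ i)⁻¹ * ((∑ q ∈ s, (h q.2 - h q.1)) ^ 2 / #s) := by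
        rw [hflux]
        field_simp
    _ ≤ (l ^ i)⁻¹ * ∑ q ∈ s, (h q.2 - h q.1) ^ 2 := by
        refine mul_le_mul_of_nonneg_left (div_le_of_le_mul₀ (Nat.cast_nonneg _)
          (sum_nonneg fun _ _ => sq_nonneg _) ?_) (by positivity)
        rw [mul_comm]
        exact sq_sum_le_card_mul_sum_sq
    _ = _ := henergy.symm

end

end SimpleGraph

open SimpleGraph

/-- `h v` plays the role of `P_v(τ_{K_r} < τ_o)`, so the left-hand side is the escape probability
`P(τ_{K_r} < τ_o^+)`. -/
theorem stmt_11_general {V : Type*} (G : SimpleGraph V) [G.LocallyFinite] (hconn : G.Connected)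
    (o : V) (l : ℝ) (hl : 1 ≤ l) (r : ℕ) (hr : 1 ≤ r)
    (h : V → ℝ) (h0 : h o = 0) (hK : ∀ v, G.dist o v = r → h v = 1)
    (hharm : ∀ v, 0 < G.dist o v → G.dist o v < r →
      h v = ∑ w ∈ G.neighborFinset v, homesickT G o l v w * h w) :
    ∑ w ∈ G.neighborFinset o, homesickT G o l o w * h w ≤
      ((G.degree o : ℝ))⁻¹ * (∑ i ∈ Finset.range r, ((bdCount G o i : ℝ))⁻¹ * l ^ i)⁻¹ := by
  obtain ⟨m, rfl⟩ : ∃ m, r = m + 1 := ⟨r - 1, by omega⟩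
  have hl₀ : 0 < l := by linarith
  set c := G.homesickConductance o l
  have hc : ∀ v w, c v w = c w v := homesickConductance_comm
  have harm : ∀ v, 0 < G.dist o v → G.dist o v ≤ m → G.laplacian c h v = 0 :=
    fun v hv hvm => laplacian_homesickConductance_eq_zero hl₀.le (hharm v hv (by omega))
  set I := G.weightedFlux o c h (fun _ _ => 1) 0
  have hflux : ∀ i ≤ m, G.weightedFlux o c h (fun _ _ => 1) i = I :=
    fun i hi => hconn.flux_eq_flux_zero hc fun v hv hvi => harm v hv (hvi.trans hi)
  have henergy : ∑ i ∈ range (m + 1), G.weightedFlux o c h (fun v w => h w - h v) i ≤ I := by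
    refine (hconn.sum_energy_le hc (homesickConductance_nonneg hl₀.le) h0 harm).trans_eq ?_
    rw [← hflux m le_rfl]
    exact sum_congr rfl fun q hq => by simp only [hK q.2 (hconn.mem_cut.mp hq).2.2]
  set S := ∑ i ∈ range (m + 1), ((bdCount G o i : ℝ))⁻¹ * l ^ i
  have hIS : I ^ 2 * S ≤ I := calc
    I ^ 2 * S = ∑ i ∈ range (m + 1), G.weightedFlux o c h (fun _ _ => 1) i ^ 2 *
        ((#(G.cut o i (i + 1)) : ℝ)⁻¹ * l ^ i) := by
      rw [mul_sum]
      refine sum_congr rfl fun i hi => ?_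
      rw [hflux i (by simpa [Nat.lt_succ_iff] using hi), hconn.card_cut_eq_bdCount]
    _ ≤ _ := sum_le_sum fun i _ => hconn.sq_flux_mul_le_energy hl₀ i
    _ ≤ I := henergy
  have hSpos : 0 < I → 0 < S := fun hI => by
    have hcut : (G.cut o 0 1).Nonempty := nonempty_of_sum_ne_zero hI.ne'
    have hterm : 0 < ((bdCount G o 0 : ℝ))⁻¹ * l ^ 0 := by
      rw [← hconn.card_cut_eq_bdCount, pow_zero, mul_one, inv_pos, Nat.cast_pos]
      exact hcut.card_pos
    exact hterm.trans_le (single_le_sum (f := fun i => ((bdCount G o i : ℝ))⁻¹ * l ^ i)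
      (fun i _ => by positivity) (mem_range.mpr m.succ_pos))
  rw [hconn.sum_homesickT_root_mul h0]
  exact mul_le_mul_of_nonneg_left (le_inv_of_sq_mul_le (by positivity) hSpos hIS) (by positivity)

/-- For the `λ`-homesick random walk,
`P(max_{i<τ_o^+} dist(o,Z_i) ≥ r) ≤ (deg o)⁻¹ (∑_{i<r} |∂_E B_i|⁻¹ λ^i)⁻¹`.
The escape probability is expressed through the hitting-probability function `h`: `h` is the
(unique, by the maximum principle) function with `h(o) = 0`, `h ≡ 1` on the sphere `K_r`,
`0 ≤ h ≤ 1`, and harmonic at every vertex strictly between `o` and `K_r`; the probability of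
reaching `K_r` before returning to `o` is `∑_w T(o,w) h(w)`. -/
theorem stmt_11 {V : Type*} (G : SimpleGraph V) [G.LocallyFinite] (hconn : G.Connected)
    (o : V) (l : ℝ) (hl : 1 ≤ l) (r : ℕ) (hr : 1 ≤ r)
    (h : V → ℝ) (h0 : h o = 0) (hK : ∀ v, G.dist o v = r → h v = 1)
    (hbdd : ∀ v, 0 ≤ h v ∧ h v ≤ 1)
    (hharm : ∀ v, 0 < G.dist o v → G.dist o v < r →
      h v = ∑ w ∈ G.neighborFinset v, homesickT G o l v w * h w) :
    ∑ w ∈ G.neighborFinset o, homesickT G o l o w * h w ≤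
      ((G.degree o : ℝ))⁻¹ * (∑ i ∈ Finset.range r, ((bdCount G o i : ℝ))⁻¹ * l ^ i)⁻¹ :=
  stmt_11_general G hconn o l hl r hr h h0 hK hharm
end
end
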